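/- arXiv:1203.6559 — 2 statements merged into one kernel-verified Lean document; each statement's English description precedes it below -/
import Mathlib

section
/- On a board of isolated stacks of heights one and two where every group has two or four tiles, the board is solvable (all tiles removable) if and only if no blocked cycle is present. -/
/-- A board is a finite multiset of isolated stacks; each stack is a list of
tile groups, with the head of the list being the top tile of the stack. -/
abbrev Board (G : Type*) := Multiset (List G)

variable {G : Type*} [DecidableEq G]

/-- The number of tiles of group `g` remaining on the board. -/
def tileCount (B : Board G) (g : G) : ℕ := (B.map (fun s => s.count g)).sum

/-- The total number of tiles on the board. -/
def totalTiles (B : Board G) : ℕ := (B.map List.length).sum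

/-- The board obtained by removing the (playable) top tiles of stacks `s₁` and
`s₂`, the remaining stacks being `rest`; emptied stacks disappear. -/
def play (s₁ s₂ : List G) (rest : Board G) : Board G :=
  Multiset.filter (fun s => s ≠ []) (s₁.tail ::ₘ s₂.tail ::ₘ rest)

/-- A legal move: remove two playable (top) tiles of the same group. -/
def Move (B B' : Board G) : Prop :=
  ∃ (g : G) (s₁ s₂ : List G) (rest : Board G),
    B = s₁ ::ₘ s₂ ::ₘ rest ∧ s₁.head? = some g ∧ s₂.head? = some g ∧
    B' = play s₁ s₂ rest

/-- A board is solvable iff some sequence of legal moves empties it. -/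
def Solvable (B : Board G) : Prop := Relation.ReflTransGen Move B 0

/-- All stacks are nonempty and of height at most two. -/
def HeightsOK (B : Board G) : Prop := ∀ s ∈ B, s ≠ [] ∧ s.length ≤ 2

/-- A blocked cycle: distinct groups `p 0, …, p k`, each with exactly two
remaining tiles, such that for each `i` there is a height-two stack with a
`p (i+1)`-tile (cyclically) on top of a `p i`-tile. -/
def BlockedCycle (B : Board G) {k : ℕ} (p : Fin (k + 1) → G) : Prop :=
  Function.Injective p ∧ (∀ i, tileCount B (p i) = 2) ∧
    ∀ i, [p (i + 1), p i] ∈ B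

/-- The board contains some blocked cycle. -/
def HasBlockedCycle (B : Board G) : Prop :=
  ∃ (k : ℕ) (p : Fin (k + 1) → G), BlockedCycle B p

/-!
A move never touches a blocked cycle, since every group of the cycle has a tile buried under the
next group; so a solvable board has none.

Conversely, by induction on the number of tiles, it suffices to find on every nonempty board
without blocked cycle a move that creates none. If no group has two tiles on top, then there are
at most as many stacks as groups; as every group has at least two tiles and every stack at most
two, every group has exactly two tiles, one of them buried, and following the tile above the
buried one runs into a blocked cycle. Otherwise some group `g` has two tiles on top. A cycle
created by removing them passes through `g`, which then had four tiles, and needs a surviving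
stack with `g` on top and one with `g` at the bottom. The two tiles are chosen so that this cannot
happen: the top of a stack `g g` if there is one (then only one tile of `g` survives outside it);
otherwise, when exactly three tiles of `g` are on top, the loop through `g` is forced, as each of
its groups has a single tile above it, so at most one of the stacks `g x` closes it, and we keep
another one.
-/

def GroupSizesOK (B : Board G) : Prop :=
  ∀ g, tileCount B g = 0 ∨ tileCount B g = 2 ∨ tileCount B g = 4

@[simp] lemma tileCount_cons (s : List G) (B : Board G) (g : G) :
    tileCount (s ::ₘ B) g = s.count g + tileCount B g := by simp [tileCount]

@[simp] lemma tileCount_add (A B : Board G) (g : G) :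
    tileCount (A + B) g = tileCount A g + tileCount B g := by simp [tileCount]

lemma tileCount_mono {A B : Board G} (h : A ≤ B) (g : G) : tileCount A g ≤ tileCount B g := by
  obtain ⟨C, rfl⟩ := Multiset.le_iff_exists_add.mp h
  simp

lemma sum_count_le_tileCount {S : List (List G)} {B : Board G} (hS : S.Nodup)
    (h : ∀ s ∈ S, s ∈ B) (g : G) : (S.map (List.count g)).sum ≤ tileCount B g := by
  have hle : (S : Board G) ≤ B :=
    (Multiset.le_iff_subset (Multiset.coe_nodup.mpr hS)).mpr h
  simpa [tileCount] using tileCount_mono hle g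

lemma count_le_tileCount {s : List G} {B : Board G} (h : s ∈ B) (g : G) :
    s.count g ≤ tileCount B g := by
  simpa using sum_count_le_tileCount (List.nodup_singleton s) (by simpa using h) g

lemma two_le_tileCount_of_mem {M : Board G} {a b g : G} (ha : [a, g] ∈ M) (hb : [g, b] ∈ M) :
    2 ≤ tileCount M g := by
  by_cases hab : [a, g] = [g, b]
  · obtain ⟨rfl, rfl⟩ : a = g ∧ g = b := by simpa using hab
    simpa using count_le_tileCount ha a
  · have := sum_count_le_tileCount (S := [[a, g], [g, b]]) (B := M) (by simpa using hab)
      (by simp [ha, hb]) g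
    simp [List.count_cons] at this
    split_ifs at this <;> omega

lemma eq_of_tileCount_eq_two {B : Board G} {a b b' c : G} (h : tileCount B a = 2) (hac : a ≠ c)
    (hc : [a, c] ∈ B) (hb : [b, a] ∈ B) (hb' : [b', a] ∈ B) : b = b' := by
  by_contra hne
  have := sum_count_le_tileCount (S := [[a, c], [b, a], [b', a]]) (B := B)
    (by simp [hne, Ne.symm hac]) (by simp [hb, hb', hc]) a
  simp [List.count_cons] at this
  omega

lemma tileCount_filter_ne_nil (M : Board G) (g : G) :
    tileCount (M.filter (fun s => s ≠ [])) g = tileCount M g := by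
  induction M using Multiset.induction with
  | empty => simp
  | cons s M ih => by_cases hs : s = [] <;> simp_all

lemma totalTiles_filter_ne_nil {α : Type*} (M : Board α) :
    totalTiles (M.filter (fun s => s ≠ [])) = totalTiles M := by
  induction M using Multiset.induction with
  | empty => simp
  | cons s M ih => by_cases hs : s = [] <;> simp_all [totalTiles]

lemma totalTiles_le_two_mul_card {α : Type*} {B : Board α} (hH : HeightsOK B) :
    totalTiles B ≤ 2 * Multiset.card B := by
  have := Multiset.sum_map_le_sum_map List.length (fun _ => 2) fun s hs => (hH s hs).2
  simpa [totalTiles, Multiset.map_const', mul_comm] using this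

@[simp] lemma tileCount_play (g : G) (t₁ t₂ : List G) (rest : Board G) (a : G) :
    tileCount (play (g :: t₁) (g :: t₂) rest) a = t₁.count a + t₂.count a + tileCount rest a := by
  simp [play, tileCount_filter_ne_nil, add_assoc]

lemma tileCount_play_self {s₁ s₂ : List G} {rest : Board G} {g : G}
    (h₁ : s₁.head? = some g) (h₂ : s₂.head? = some g) :
    tileCount (play s₁ s₂ rest) g + 2 = tileCount (s₁ ::ₘ s₂ ::ₘ rest) g := by
  obtain ⟨t₁, rfl⟩ := List.head?_eq_some_iff.mp h₁
  obtain ⟨t₂, rfl⟩ := List.head?_eq_some_iff.mp h₂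
  simp
  omega

lemma tileCount_play_of_ne {s₁ s₂ : List G} {rest : Board G} {g a : G}
    (h₁ : s₁.head? = some g) (h₂ : s₂.head? = some g) (ha : a ≠ g) :
    tileCount (play s₁ s₂ rest) a = tileCount (s₁ ::ₘ s₂ ::ₘ rest) a := by
  obtain ⟨t₁, rfl⟩ := List.head?_eq_some_iff.mp h₁
  obtain ⟨t₂, rfl⟩ := List.head?_eq_some_iff.mp h₂
  simp [Ne.symm ha, add_assoc]

lemma mem_play_of_mem_rest {α : Type*} {s₁ s₂ s : List α} {rest : Board α} (h : s ∈ rest)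
    (hs : s ≠ []) : s ∈ play s₁ s₂ rest := by
  simp [play, h, hs]

lemma mem_rest_of_mem_play {α : Type*} {s₁ s₂ s : List α} {rest : Board α}
    (hH : HeightsOK (s₁ ::ₘ s₂ ::ₘ rest)) (h : s ∈ play s₁ s₂ rest) (hs : s.length = 2) :
    s ∈ rest := by
  have h₁ := (hH s₁ (by simp)).2
  have h₂ := (hH s₂ (by simp)).2
  simp only [play, Multiset.mem_filter, Multiset.mem_cons] at h
  rcases h.1 with rfl | rfl | h
  · simp at hs; omega
  · simp at hs; omega
  · exact h

lemma heightsOK_play {α : Type*} {s₁ s₂ : List α} {rest : Board α}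
    (hH : HeightsOK (s₁ ::ₘ s₂ ::ₘ rest)) : HeightsOK (play s₁ s₂ rest) := by
  intro s hs
  simp only [play, Multiset.mem_filter, Multiset.mem_cons] at hs
  refine ⟨hs.2, ?_⟩
  rcases hs.1 with rfl | rfl | h
  · have := (hH s₁ (by simp)).2
    simp; omega
  · have := (hH s₂ (by simp)).2
    simp; omega
  · exact (hH s (by simp [h])).2

namespace Move

lemma totalTiles_lt {α : Type*} {B B' : Board α} (h : Move B B') :
    totalTiles B' < totalTiles B := by
  obtain ⟨g, s₁, s₂, rest, rfl, h₁, h₂, rfl⟩ := h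
  obtain ⟨t₁, rfl⟩ := List.head?_eq_some_iff.mp h₁
  obtain ⟨t₂, rfl⟩ := List.head?_eq_some_iff.mp h₂
  rw [play, totalTiles_filter_ne_nil]
  simp [totalTiles]
  omega

lemma heightsOK {α : Type*} {B B' : Board α} (h : Move B B') (hH : HeightsOK B) : HeightsOK B' := by
  obtain ⟨g, s₁, s₂, rest, rfl, -, -, rfl⟩ := h
  exact heightsOK_play hH

lemma groupSizesOK {B B' : Board G} (h : Move B B') (hs : GroupSizesOK B) : GroupSizesOK B' := by
  obtain ⟨g, s₁, s₂, rest, rfl, h₁, h₂, rfl⟩ := h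
  intro a
  by_cases ha : a = g
  · subst ha
    have := tileCount_play_self h₁ h₂ (rest := rest)
    rcases hs a with h | h | h <;> omega
  · rw [tileCount_play_of_ne h₁ h₂ ha]
    exact hs a

lemma hasBlockedCycle {B B' : Board G} (h : Move B B') (hc : HasBlockedCycle B) :
    HasBlockedCycle B' := by
  obtain ⟨g, s₁, s₂, rest, rfl, h₁, h₂, rfl⟩ := h
  obtain ⟨k, p, hinj, hcount, hmem⟩ := hc
  obtain ⟨t₁, rfl⟩ := List.head?_eq_some_iff.mp h₁
  obtain ⟨t₂, rfl⟩ := List.head?_eq_some_iff.mp h₂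
  have hg : ∀ i, p i ≠ g := by
    intro i hi
    have hc := hcount i
    have hm := hmem i
    rw [hi] at hc hm
    simp only [Multiset.mem_cons, List.cons.injEq] at hm
    rcases hm with ⟨-, rfl⟩ | ⟨-, rfl⟩ | hm
    · simp at hc
    · simp at hc
      omega
    · have := count_le_tileCount hm g
      simp [List.count_cons] at hc this
      omega
  refine ⟨k, p, hinj, fun i => ?_, fun i => ?_⟩
  · rw [tileCount_play_of_ne h₁ h₂ (hg i)]
    exact hcount i
  · have hm := hmem i
    simp only [Multiset.mem_cons, List.cons.injEq] at hm
    rcases hm with ⟨hi, -⟩ | ⟨hi, -⟩ | hm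
    · exact absurd hi (hg _)
    · exact absurd hi (hg _)
    · exact mem_play_of_mem_rest hm (List.cons_ne_nil _ _)

end Move

theorem not_hasBlockedCycle_of_solvable {B : Board G} (h : Solvable B) : ¬ HasBlockedCycle B := by
  intro hc
  obtain ⟨k, p, -, -, hmem⟩ : HasBlockedCycle (0 : Board G) :=
    Relation.ReflTransGen.rec (motive := fun C _ => HasBlockedCycle C) hc
      (fun _ hm ih => hm.hasBlockedCycle ih) h
  exact Multiset.notMem_zero _ (hmem 0)

def topStacks (B : Board G) (g : G) : Board G := B.filter fun s => s.head? = some g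

lemma topStacks_le (B : Board G) (g : G) : topStacks B g ≤ B := Multiset.filter_le _ B

lemma head?_eq_of_mem_topStacks {B : Board G} {g : G} {s : List G} (h : s ∈ topStacks B g) :
    s.head? = some g :=
  (Multiset.mem_filter.mp h).2

lemma exists_eq_cons_cons {α : Type*} {s : Multiset α} (h : 2 ≤ Multiset.card s) :
    ∃ a b t, s = a ::ₘ b ::ₘ t := by
  induction s using Quotient.inductionOn with
  | h l =>
    match l, h with
    | a :: b :: t, _ => exact ⟨a, b, t, rfl⟩

lemma card_topStacks_le_tileCount (B : Board G) (g : G) :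
    Multiset.card (topStacks B g) ≤ tileCount B g := by
  have h := Multiset.card_nsmul_le_sum (s := (topStacks B g).map (List.count g)) (a := 1) <| by
    intro x hx
    obtain ⟨s, hs, rfl⟩ := Multiset.mem_map.mp hx
    obtain ⟨t, rfl⟩ := List.head?_eq_some_iff.mp (head?_eq_of_mem_topStacks hs)
    simp
  simpa using h.trans (tileCount_mono (topStacks_le B g) g)

lemma tileCount_topStacks_self {B : Board G} {g : G} (hH : HeightsOK B) (hgg : [g, g] ∉ B) :
    tileCount (topStacks B g) g = Multiset.card (topStacks B g) := by
  have hone : ∀ s ∈ topStacks B g, s.count g = 1 := by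
    intro s hs
    obtain ⟨hsB, hhead⟩ := Multiset.mem_filter.mp hs
    obtain ⟨t, rfl⟩ := List.head?_eq_some_iff.mp hhead
    have hlen := (hH _ hsB).2
    match t, hlen with
    | [], _ => simp
    | [x], _ =>
      have hx : x ≠ g := fun h => hgg (h ▸ hsB)
      simp [hx]
  rw [tileCount, Multiset.map_congr rfl hone]
  simp

lemma tileCount_topStacks_add (B : Board G) (g : G) :
    tileCount (topStacks B g) g + tileCount (B.filter fun s => ¬ s.head? = some g) g =
      tileCount B g := by
  rw [← tileCount_add, topStacks, Multiset.filter_add_not]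

theorem hasBlockedCycle_of_mapsTo {B : Board G} {P : Finset G} (hP : P.Nonempty) {σ : G → G}
    (hσ : Set.MapsTo σ P P) (hmem : ∀ g ∈ P, [σ g, g] ∈ B)
    (hcount : ∀ g ∈ P, tileCount B g = 2) : HasBlockedCycle B := by
  obtain ⟨g₀, hg₀⟩ := hP
  obtain ⟨m, -, n, -, hmn, heq⟩ := Finset.exists_ne_map_eq_of_card_lt_of_maps_to
    (s := Finset.range (P.card + 1)) (by simp) (f := fun n => σ^[n] g₀)
    fun n _ => hσ.iterate n hg₀
  wlog hlt : m < n generalizing m n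
  · exact this n m hmn.symm heq.symm (by omega)
  set x := σ^[m] g₀
  have hx : x ∈ Function.periodicPts σ := by
    refine Function.mk_mem_periodicPts (n := n - m) (by omega) ?_
    rw [Function.IsPeriodicPt, Function.IsFixedPt, ← Function.iterate_add_apply,
      Nat.sub_add_cancel hlt.le]
    exact heq.symm
  obtain ⟨k, hk⟩ := Nat.exists_eq_succ_of_ne_zero
    (Function.minimalPeriod_pos_of_mem_periodicPts hx).ne'
  have hxP : ∀ j, σ^[j] x ∈ P := fun j => hσ.iterate j (hσ.iterate m hg₀)
  refine ⟨k, fun i => σ^[i] x, fun i j hij => Fin.ext ?_, fun i => hcount _ (hxP i), fun i => ?_⟩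
  · exact Function.iterate_injOn_Iio_minimalPeriod (show (i : ℕ) < _ by rw [hk]; exact i.isLt)
      (show (j : ℕ) < _ by rw [hk]; exact j.isLt) hij
  · have hsucc : σ^[(i + 1 : Fin (k + 1))] x = σ (σ^[i] x) := by
      rw [Fin.val_add_one]
      split_ifs with hi
      · rw [hi, Fin.val_last, ← Function.iterate_succ_apply' σ k x, ← hk,
          Function.iterate_minimalPeriod, Function.iterate_zero_apply]
      · exact Function.iterate_succ_apply' σ i x
    simpa [hsucc] using hmem _ (hxP i)

def groups (B : Board G) : Finset G := (B.bind fun s => (s : Multiset G)).toFinset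

lemma mem_groups {B : Board G} {g : G} : g ∈ groups B ↔ ∃ s ∈ B, g ∈ s := by
  simp [groups]

lemma sum_tileCount_groups (B : Board G) : ∑ g ∈ groups B, tileCount B g = totalTiles B := by
  have h : ∀ g, tileCount B g = (B.bind fun s => (s : Multiset G)).count g := by
    simp [tileCount, Multiset.count_bind]
  simp only [h, groups, Multiset.toFinset_sum_count_eq]
  simp [totalTiles, Multiset.card_bind, Function.comp_def]

lemma card_le_card_groups {B : Board G} (hH : HeightsOK B)
    (hstuck : ∀ g, Multiset.card (topStacks B g) ≤ 1) : Multiset.card B ≤ (groups B).card := by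
  have hnd : (B.map List.head?).Nodup := by
    refine Multiset.nodup_iff_count_le_one.mpr fun o => ?_
    cases o with
    | none =>
      rw [Multiset.count_eq_zero.mpr]
      · omega
      simpa using fun h => (hH [] h).1 rfl
    | some g =>
      rw [Multiset.count_map]
      convert hstuck g using 2
      exact Multiset.filter_congr fun s _ => eq_comm
  have hsub : B.map List.head? ≤ (groups B).val.map some := by
    refine (Multiset.le_iff_subset hnd).mpr fun o ho => ?_
    obtain ⟨s, hs, rfl⟩ := Multiset.mem_map.mp ho
    obtain ⟨a, t, rfl⟩ := List.exists_cons_of_ne_nil (hH s hs).1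
    simpa [mem_groups] using ⟨_, hs, List.mem_cons_self⟩
  simpa using Multiset.card_le_card hsub

lemma count_le_ite_head {s : List G} {g : G} (hs : s.length ≤ 2) (hbot : ∀ z, s ≠ [z, g]) :
    s.count g ≤ if s.head? = some g then 1 else 0 := by
  match s, hs with
  | [], _ => simp
  | [x], _ => by_cases hx : x = g <;> simp [hx]
  | [x, y], _ =>
    have hy : y ≠ g := fun h => hbot x (h ▸ rfl)
    by_cases hx : x = g <;> simp [hx, hy]

lemma tileCount_le_card_topStacks {B : Board G} {g : G} (hH : HeightsOK B)
    (hbot : ∀ z, [z, g] ∉ B) : tileCount B g ≤ Multiset.card (topStacks B g) := by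
  induction B using Multiset.induction with
  | empty => simp [tileCount]
  | cons s B ih =>
    have hs := count_le_ite_head (g := g) (hH s (by simp)).2 fun z h => hbot z (by simp [h])
    have := ih (fun t ht => hH t (by simp [ht])) fun z hz => hbot z (by simp [hz])
    rw [tileCount_cons, topStacks, Multiset.filter_cons]
    split_ifs at hs ⊢ <;> simp [topStacks] at this ⊢ <;> omega

theorem hasBlockedCycle_of_stuck {B : Board G} (hH : HeightsOK B) (hs : GroupSizesOK B)
    (hB : B ≠ 0) (hstuck : ∀ g, Multiset.card (topStacks B g) ≤ 1) : HasBlockedCycle B := by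
  have hpos : ∀ g ∈ groups B, 2 ≤ tileCount B g := fun g hg => by
    obtain ⟨s, hs', hgs⟩ := mem_groups.mp hg
    have := count_le_tileCount hs' g
    have := List.count_pos_iff.mpr hgs
    rcases hs g with h | h | h <;> omega
  have hcount : ∀ g ∈ groups B, tileCount B g = 2 := by
    by_contra! ⟨g, hg, hne⟩
    have hlt := Finset.sum_lt_sum hpos ⟨g, hg, lt_of_le_of_ne (hpos g hg) hne.symm⟩
    rw [sum_tileCount_groups, Finset.sum_const, smul_eq_mul] at hlt
    have := totalTiles_le_two_mul_card hH
    have := card_le_card_groups hH hstuck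
    omega
  have hbot : ∀ g ∈ groups B, ∃ z, [z, g] ∈ B := fun g hg => by
    by_contra! h
    have := tileCount_le_card_topStacks hH h
    have := hstuck g
    have := hcount g hg
    omega
  choose! σ hσ using hbot
  obtain ⟨s, hsB⟩ := Multiset.exists_mem_of_ne_zero hB
  obtain ⟨a, t, rfl⟩ := List.exists_cons_of_ne_nil (hH s hsB).1
  refine hasBlockedCycle_of_mapsTo ⟨a, mem_groups.mpr ⟨_, hsB, List.mem_cons_self⟩⟩
    (fun g hg => mem_groups.mpr ⟨_, hσ g hg, List.mem_cons_self⟩) hσ hcount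

/-- The cycles that a move of `g` can create: blocked cycles through `g`, except that `g` may
have four tiles. -/
structure IsLoopAt (B : Board G) (g : G) {k : ℕ} (p : Fin (k + 1) → G) : Prop where
  injective : Function.Injective p
  zero : p 0 = g
  tileCount_eq : ∀ i, i ≠ 0 → tileCount B (p i) = 2
  mem : ∀ i, [p (i + 1), p i] ∈ B

theorem exists_isLoopAt_of_play {s₁ s₂ : List G} {rest : Board G} {g : G}
    (h₁ : s₁.head? = some g) (h₂ : s₂.head? = some g) (hH : HeightsOK (s₁ ::ₘ s₂ ::ₘ rest))
    (hB : ¬ HasBlockedCycle (s₁ ::ₘ s₂ ::ₘ rest)) (hC : HasBlockedCycle (play s₁ s₂ rest)) :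
    tileCount (s₁ ::ₘ s₂ ::ₘ rest) g = 4 ∧ ∃ (k : ℕ) (p : Fin (k + 1) → G),
      IsLoopAt (s₁ ::ₘ s₂ ::ₘ rest) g p ∧ ∀ i, [p (i + 1), p i] ∈ rest := by
  obtain ⟨k, q, hinj, hcount, hmem⟩ := hC
  have hrest : ∀ i, [q (i + 1), q i] ∈ rest := fun i => mem_rest_of_mem_play hH (hmem i) rfl
  have hrest' : ∀ i, [q (i + 1), q i] ∈ s₁ ::ₘ s₂ ::ₘ rest := fun i => by simp [hrest i]
  have hcount' : ∀ i, q i ≠ g → tileCount (s₁ ::ₘ s₂ ::ₘ rest) (q i) = 2 := fun i hi =>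
    tileCount_play_of_ne h₁ h₂ hi ▸ hcount i
  by_cases hg : ∃ j, q j = g
  swap
  · exact absurd ⟨k, q, hinj, fun i => hcount' i (not_exists.mp hg i), hrest'⟩ hB
  obtain ⟨j, rfl⟩ := hg
  have h4 := tileCount_play_self h₁ h₂ (rest := rest)
  rw [hcount j] at h4
  refine ⟨h4.symm, k, fun i => q (i + j), ⟨hinj.comp (add_left_injective j), by simp,
    fun i hi => hcount' _ fun h => hi (by simpa using hinj h), fun i => ?_⟩, fun i => ?_⟩
  · simpa [add_right_comm] using hrest' (i + j)
  · simpa [add_right_comm] using hrest (i + j)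

namespace IsLoopAt

variable {B M : Board G} {g : G} {k : ℕ} {p : Fin (k + 1) → G}

lemma mem_bottom (hp : IsLoopAt B g p) (hM : ∀ i, [p (i + 1), p i] ∈ M) : [p 1, g] ∈ M := by
  simpa [hp.zero] using hM 0

lemma mem_top (hp : IsLoopAt B g p) (hM : ∀ i, [p (i + 1), p i] ∈ M) :
    [g, p (Fin.last k)] ∈ M := by
  simpa [hp.zero] using hM (Fin.last k)

lemma tileCount_last (hp : IsLoopAt B g p) (hgg : [g, g] ∉ B) :
    p (Fin.last k) ≠ g ∧ tileCount B (p (Fin.last k)) = 2 := by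
  have hne : p (Fin.last k) ≠ g := fun h => hgg (h ▸ hp.mem_top hp.mem)
  exact ⟨hne, hp.tileCount_eq _ fun h => hne (h ▸ hp.zero)⟩

lemma eq_of_mem (hp : IsLoopAt B g p) (hbot : ∀ z z', [z, g] ∈ B → [z', g] ∈ B → z = z')
    (i : Fin (k + 1)) {b b' : G} (hb : [b, p i] ∈ B) (hb' : [b', p i] ∈ B) : b = b' := by
  by_cases hi : i = 0
  · subst hi
    rw [hp.zero] at hb hb'
    exact hbot _ _ hb hb'
  · refine eq_of_tileCount_eq_two (hp.tileCount_eq i hi) (c := p (i - 1)) (fun h => hi ?_)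
      (by simpa using hp.mem (i - 1)) hb hb'
    obtain rfl : k = 0 := by
      simpa using Fin.one_eq_zero_iff.mp (sub_eq_self.mp (hp.injective h).symm)
    exact Fin.fin_one_eq_zero i

open Fin.NatCast in
lemma dvd_of_eq {l : ℕ} {q : Fin (l + 1) → G} (hp : IsLoopAt B g p) (hq : IsLoopAt B g q)
    (hpq : ∀ n : ℕ, p n = q n) : l + 1 ∣ k + 1 := by
  refine Fin.natCast_eq_zero.mp (hq.injective ?_)
  rw [← hpq, Fin.natCast_eq_zero.mpr dvd_rfl, hp.zero, hq.zero]

open Fin.NatCast in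
/-- The loop through `g` is traced out by following, from `g`, the unique tile above. -/
lemma last_eq {l : ℕ} {q : Fin (l + 1) → G} (hp : IsLoopAt B g p) (hq : IsLoopAt B g q)
    (hbot : ∀ z z', [z, g] ∈ B → [z', g] ∈ B → z = z') : p (Fin.last k) = q (Fin.last l) := by
  have hpq : ∀ n : ℕ, p n = q n := by
    intro n
    induction n with
    | zero => simp [hp.zero, hq.zero]
    | succ n ih =>
      simp only [Nat.cast_succ]
      exact hp.eq_of_mem hbot n (hp.mem n) (ih ▸ hq.mem n)
  obtain rfl : k = l := Nat.succ_injective <| Nat.dvd_antisymm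
    (hq.dvd_of_eq hp fun n => (hpq n).symm) (hp.dvd_of_eq hq hpq)
  rw [← Fin.natCast_eq_last, hpq]

end IsLoopAt

/-- A cycle created by the move runs through `g`: it uses a surviving stack with `g` at the bottom
and, with `g` on top, one of the stacks `K`. -/
theorem exists_move_of_topStacks_eq {B : Board G} {g : G} {u v : List G} {K : Board G}
    (hT : topStacks B g = u ::ₘ v ::ₘ K) (hH : HeightsOK B) (hB : ¬ HasBlockedCycle B)
    (hsafe : tileCount B g = 4 → ∀ (k : ℕ) (p : Fin (k + 1) → G), IsLoopAt B g p →
      [p 1, g] ∈ K + B.filter (fun s => ¬ s.head? = some g) → [g, p (Fin.last k)] ∈ K → False) :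
    ∃ B', Move B B' ∧ ¬ HasBlockedCycle B' := by
  set N := B.filter (fun s => ¬ s.head? = some g)
  have hsplit : B = u ::ₘ v ::ₘ (K + N) := by
    conv_lhs => rw [← Multiset.filter_add_not (fun s => s.head? = some g) B]
    rw [← topStacks, hT]
    simp [N]
  have hu := head?_eq_of_mem_topStacks (hT ▸ Multiset.mem_cons_self u _)
  have hv := head?_eq_of_mem_topStacks (hT ▸ Multiset.mem_cons_of_mem (Multiset.mem_cons_self v K))
  refine ⟨_, ⟨g, u, v, _, hsplit, hu, hv, rfl⟩, fun hC => ?_⟩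
  rw [hsplit] at hH hB
  obtain ⟨h4, k, p, hp, hrest⟩ := exists_isLoopAt_of_play hu hv hH hB hC
  rw [← hsplit] at h4 hp
  refine hsafe h4 k p hp (hp.mem_bottom hrest) ?_
  rcases Multiset.mem_add.mp (hp.mem_top hrest) with h | h
  · exact h
  · simp [N] at h

theorem exists_move_of_tileCount_eq_two {B : Board G} {g : G} (hH : HeightsOK B)
    (hB : ¬ HasBlockedCycle B) (hT : 2 ≤ Multiset.card (topStacks B g)) (h2 : tileCount B g = 2) :
    ∃ B', Move B B' ∧ ¬ HasBlockedCycle B' := by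
  obtain ⟨u, v, K, hT⟩ := exists_eq_cons_cons hT
  exact exists_move_of_topStacks_eq hT hH hB fun h4 => by omega

theorem exists_move_of_card_topStacks_eq_two {B : Board G} {g : G} (hH : HeightsOK B)
    (hB : ¬ HasBlockedCycle B) (hT : Multiset.card (topStacks B g) = 2) :
    ∃ B', Move B B' ∧ ¬ HasBlockedCycle B' := by
  obtain ⟨u, v, hT⟩ := Multiset.card_eq_two.mp hT
  exact exists_move_of_topStacks_eq (K := 0) hT hH hB fun _ _ _ _ _ h => by simp at h

theorem exists_move_of_double_mem {B : Board G} {g : G} (hH : HeightsOK B)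
    (hB : ¬ HasBlockedCycle B) (hT : 2 ≤ Multiset.card (topStacks B g)) (hgg : [g, g] ∈ B) :
    ∃ B', Move B B' ∧ ¬ HasBlockedCycle B' := by
  have hggT : [g, g] ∈ topStacks B g := Multiset.mem_filter.mpr ⟨hgg, rfl⟩
  obtain ⟨v, hv⟩ := Multiset.card_pos_iff_exists_mem.mp <| by
    rw [Multiset.card_erase_of_mem hggT, Nat.pred_eq_sub_one]
    omega
  obtain ⟨K, hvK⟩ := Multiset.exists_cons_of_mem hv
  have hT : topStacks B g = [g, g] ::ₘ v ::ₘ K := by rw [← hvK, Multiset.cons_erase hggT]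
  refine exists_move_of_topStacks_eq hT hH hB fun h4 k p hp hbot htop => ?_
  have h2 := two_le_tileCount_of_mem hbot (Multiset.mem_add.mpr (Or.inl htop))
  have hvg : 1 ≤ v.count g := by
    obtain ⟨t, rfl⟩ := List.head?_eq_some_iff.mp <| head?_eq_of_mem_topStacks
      (hT ▸ Multiset.mem_cons_of_mem (Multiset.mem_cons_self v K))
    simp
  have hsum := tileCount_topStacks_add B g
  rw [hT] at hsum
  simp at hsum h2
  omega

lemma eq_of_mem_of_tileCount_filter_le_one {B : Board G} {g : G} (hgg : [g, g] ∉ B)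
    (h : tileCount (B.filter fun s => ¬ s.head? = some g) g ≤ 1) {z z' : G} (hz : [z, g] ∈ B)
    (hz' : [z', g] ∈ B) : z = z' := by
  have hne : ∀ z, [z, g] ∈ B → z ≠ g := fun z hz h => hgg (h ▸ hz)
  by_contra hzz
  have := sum_count_le_tileCount (S := [[z, g], [z', g]])
    (B := B.filter fun s => ¬ s.head? = some g) (by simpa using hzz)
    (by simp [hz, hz', hne z hz, hne z' hz']) g
  simp [hne z hz, hne z' hz'] at this
  omega

lemma exists_mem_topStacks_ne_loop {B : Board G} {g : G} (hgg : [g, g] ∉ B)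
    (hbot : ∀ z z', [z, g] ∈ B → [z', g] ∈ B → z = z') (hT : 2 < Multiset.card (topStacks B g)) :
    ∃ w ∈ topStacks B g, ∀ (k : ℕ) (p : Fin (k + 1) → G),
      IsLoopAt B g p → w ≠ [g, p (Fin.last k)] := by
  by_contra! hall
  obtain ⟨w₀, hw₀⟩ :=
    Multiset.card_pos_iff_exists_mem.mp (by omega : 0 < Multiset.card (topStacks B g))
  obtain ⟨k, p, hp, -⟩ := hall w₀ hw₀
  have hrep : topStacks B g = Multiset.replicate (Multiset.card (topStacks B g))
      [g, p (Fin.last k)] := by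
    refine Multiset.eq_replicate.mpr ⟨rfl, fun w hw => ?_⟩
    obtain ⟨l, q, hq, rfl⟩ := hall w hw
    rw [hq.last_eq hp hbot]
  obtain ⟨hne, h2⟩ := hp.tileCount_last hgg
  have := tileCount_mono (topStacks_le B g) (p (Fin.last k))
  rw [hrep, h2] at this
  simp [tileCount, Ne.symm hne] at this
  omega

theorem exists_move_of_card_topStacks_eq_three {B : Board G} {g : G} (hH : HeightsOK B)
    (hB : ¬ HasBlockedCycle B) (hgg : [g, g] ∉ B) (h4 : tileCount B g = 4)
    (hT : Multiset.card (topStacks B g) = 3) : ∃ B', Move B B' ∧ ¬ HasBlockedCycle B' := by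
  have hsum := tileCount_topStacks_add B g
  rw [tileCount_topStacks_self hH hgg] at hsum
  obtain ⟨w, hwT, hw⟩ := exists_mem_topStacks_ne_loop hgg
    (fun _ _ => eq_of_mem_of_tileCount_filter_le_one hgg (by omega)) (by omega)
  obtain ⟨u, v, huv⟩ := Multiset.card_eq_two.mp <| by
    rw [Multiset.card_erase_of_mem hwT, hT]
    rfl
  have hsplit : topStacks B g = u ::ₘ v ::ₘ {w} := by
    rw [← Multiset.cons_erase hwT, huv]
    show w ::ₘ u ::ₘ {v} = _
    rw [Multiset.cons_swap]
    exact congrArg (u ::ₘ ·) (Multiset.pair_comm w v)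
  exact exists_move_of_topStacks_eq hsplit hH hB fun _ k p hp _ htop =>
    hw k p hp (Multiset.mem_singleton.mp htop).symm

theorem exists_move_of_card_topStacks_eq_four {B : Board G} {g : G} (hH : HeightsOK B)
    (hB : ¬ HasBlockedCycle B) (hgg : [g, g] ∉ B) (h4 : tileCount B g = 4)
    (hT : Multiset.card (topStacks B g) = 4) : ∃ B', Move B B' ∧ ¬ HasBlockedCycle B' := by
  have hsum := tileCount_topStacks_add B g
  rw [tileCount_topStacks_self hH hgg] at hsum
  obtain ⟨u, v, K, hsplit⟩ := exists_eq_cons_cons (by omega : 2 ≤ Multiset.card (topStacks B g))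
  refine exists_move_of_topStacks_eq hsplit hH hB fun _ k p hp _ _ => ?_
  have hb := hp.mem_bottom hp.mem
  have hne : p 1 ≠ g := fun h => hgg (h ▸ hb)
  have := count_le_tileCount (Multiset.mem_filter.mpr ⟨hb, by simpa using hne⟩ :
    [p 1, g] ∈ B.filter fun s => ¬ s.head? = some g) g
  simp [hne] at this
  omega

theorem exists_move_not_hasBlockedCycle {B : Board G} (hH : HeightsOK B) (hs : GroupSizesOK B)
    (hB₀ : B ≠ 0) (hB : ¬ HasBlockedCycle B) : ∃ B', Move B B' ∧ ¬ HasBlockedCycle B' := by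
  by_cases hstuck : ∀ g, Multiset.card (topStacks B g) ≤ 1
  · exact absurd (hasBlockedCycle_of_stuck hH hs hB₀ hstuck) hB
  obtain ⟨g, hg⟩ := not_forall.mp hstuck
  have hle := card_topStacks_le_tileCount B g
  rcases hs g with h0 | h2 | h4
  · omega
  · exact exists_move_of_tileCount_eq_two hH hB (by omega) h2
  by_cases hgg : [g, g] ∈ B
  · exact exists_move_of_double_mem hH hB (by omega) hgg
  obtain h | h | h : Multiset.card (topStacks B g) = 2 ∨ Multiset.card (topStacks B g) = 3 ∨
      Multiset.card (topStacks B g) = 4 := by omega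
  · exact exists_move_of_card_topStacks_eq_two hH hB h
  · exact exists_move_of_card_topStacks_eq_three hH hB hgg h4 h
  · exact exists_move_of_card_topStacks_eq_four hH hB hgg h4 h

theorem solvable_of_not_hasBlockedCycle {B : Board G} (hH : HeightsOK B) (hs : GroupSizesOK B)
    (hB : ¬ HasBlockedCycle B) : Solvable B := by
  induction hn : totalTiles B using Nat.strong_induction_on generalizing B with
  | _ n ih =>
    by_cases hB₀ : B = 0
    · subst hB₀
      exact Relation.ReflTransGen.refl
    obtain ⟨B', hm, hB'⟩ := exists_move_not_hasBlockedCycle hH hs hB₀ hB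
    exact Relation.ReflTransGen.head hm
      (ih _ (hn ▸ hm.totalTiles_lt) (hm.heightsOK hH) (hm.groupSizesOK hs) hB' rfl)

/-- with stacks of heights one and two and all groups of size two
or four, the board is solvable iff no blocked cycle is present. -/
theorem stmt2 (B : Board G) (hH : HeightsOK B)
    (hs : ∀ g : G, tileCount B g = 0 ∨ tileCount B g = 2 ∨ tileCount B g = 4) :
    Solvable B ↔ ¬ HasBlockedCycle B :=
  ⟨not_hasBlockedCycle_of_solvable, solvable_of_not_hasBlockedCycle hH hs⟩
end

section
/- Commuting moves preserve solvability order-independently: if matches m1 and m2 belong to different groups and are both playable on board B, then the board obtained after playing m1 then m2 is solvable if and only if the board obtained after playing m2 then m1 is solvable. -/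
variable {G : Type*} [DecidableEq G]

/-! Both orders produce literally the same board. A stack that survives the first match is
nonempty, so the residual boards `r`, `r'` are just the single plays, and two plays of disjoint
pairs of stacks commute, since `play` only pops tops and drops emptied stacks. -/

section

omit [DecidableEq G]

theorem play_cons {s : List G} (hs : s ≠ []) (s₁ s₂ : List G) (rest : Board G) :
    play s₁ s₂ (s ::ₘ rest) = s ::ₘ play s₁ s₂ rest := by
  rw [play, play, Multiset.cons_swap s₂.tail, Multiset.cons_swap s₁.tail,
    Multiset.filter_cons_of_pos (p := (· ≠ [])) _ hs]

theorem ne_nil_of_mem_play {s s₁ s₂ : List G} {rest : Board G} (h : s ∈ play s₁ s₂ rest) :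
    s ≠ [] :=
  (Multiset.mem_filter.mp h).2

theorem eq_play_of_play_cons_cons {s₁ s₂ t₁ t₂ : List G} {rest r : Board G}
    (h : play s₁ s₂ (t₁ ::ₘ t₂ ::ₘ rest) = t₁ ::ₘ t₂ ::ₘ r) : r = play s₁ s₂ rest := by
  have ht₁ : t₁ ≠ [] := ne_nil_of_mem_play (h ▸ Multiset.mem_cons_self _ _)
  have ht₂ : t₂ ≠ [] :=
    ne_nil_of_mem_play (h ▸ Multiset.mem_cons_of_mem (Multiset.mem_cons_self _ _))
  rw [play_cons ht₁, play_cons ht₂] at h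
  exact (Multiset.cons_inj_right _ |>.mp (Multiset.cons_inj_right _ |>.mp h)).symm

theorem play_play (s₁ s₂ t₁ t₂ : List G) (rest : Board G) :
    play s₁ s₂ (play t₁ t₂ rest) =
      (s₁.tail ::ₘ s₂.tail ::ₘ t₁.tail ::ₘ t₂.tail ::ₘ rest).filter (· ≠ []) := by
  simp only [play, ← Multiset.singleton_add, Multiset.filter_add, Multiset.filter_filter, and_self]

theorem play_comm (s₁ s₂ t₁ t₂ : List G) (rest : Board G) :
    play t₁ t₂ (play s₁ s₂ rest) = play s₁ s₂ (play t₁ t₂ rest) := by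
  rw [play_play, play_play, Multiset.cons_swap s₂.tail t₁.tail, Multiset.cons_swap s₁.tail t₁.tail,
    Multiset.cons_swap s₂.tail t₂.tail, Multiset.cons_swap s₁.tail t₂.tail]

end

theorem stmt12_general (s₁ s₂ t₁ t₂ : List G) (rest : Board G) :
    ∀ r r' : Board G, play s₁ s₂ (t₁ ::ₘ t₂ ::ₘ rest) = t₁ ::ₘ t₂ ::ₘ r →
      play t₁ t₂ (s₁ ::ₘ s₂ ::ₘ rest) = s₁ ::ₘ s₂ ::ₘ r' →
      (Solvable (play t₁ t₂ r) ↔ Solvable (play s₁ s₂ r')) := by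
  intro r r' h₁ h₂
  rw [eq_play_of_play_cons_cons h₁, eq_play_of_play_cons_cons h₂, play_comm]

/-- playing two matches of distinct groups in either order yields
boards that are equi-solvable. -/
theorem stmt12 (B : Board G) (hH : HeightsOK B) (g₁ g₂ : G) (hne : g₁ ≠ g₂)
    (s₁ s₂ t₁ t₂ : List G) (rest : Board G)
    (hB : B = s₁ ::ₘ s₂ ::ₘ t₁ ::ₘ t₂ ::ₘ rest)
    (hs₁ : s₁.head? = some g₁) (hs₂ : s₂.head? = some g₁)
    (ht₁ : t₁.head? = some g₂) (ht₂ : t₂.head? = some g₂) :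
    ∀ r r' : Board G, play s₁ s₂ (t₁ ::ₘ t₂ ::ₘ rest) = t₁ ::ₘ t₂ ::ₘ r →
      play t₁ t₂ (s₁ ::ₘ s₂ ::ₘ rest) = s₁ ::ₘ s₂ ::ₘ r' →
      (Solvable (play t₁ t₂ r) ↔ Solvable (play s₁ s₂ r')) :=
  stmt12_general s₁ s₂ t₁ t₂ rest
end
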